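/- An irrational number x is a Brjuno number if and only if both x and −x are semi-Brjuno numbers. -/

import Mathlib

open Set Filter

/-- The Gauss map `G(t) = 1/t − ⌊1/t⌋`. -/
noncomputable def gmap (t : ℝ) : ℝ := 1 / t - ⌊1 / t⌋

/-- `ra y n = a_{n+1}(y) = ⌊1/G^n(y)⌋`, the regular continued fraction partial
quotients of `y`. -/
noncomputable def ra (y : ℝ) (n : ℕ) : ℤ := ⌊1 / (gmap^[n] y)⌋

/-- `qcf y (n+1) = q_n`, with `q_{-1} = 0`, `q_0 = 1` and
`q_{n+1} = a_{n+1}·q_n + q_{n−1}`: the denominators of the regular convergents. -/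
noncomputable def qcf (y : ℝ) : ℕ → ℤ
  | 0 => 0
  | 1 => 1
  | n + 2 => ra y n * qcf y (n + 1) + qcf y n

/-- The by-excess continued fraction map `A_0(x) = ⌊1/x + 1⌋ − 1/x`. -/
noncomputable def exm (x : ℝ) : ℝ := ⌊1 / x + 1⌋ - 1 / x

/-- `bEx x n = b_{n+1} = ⌊1/A_0^n(x) + 1⌋`, the by-excess digits of `x`. -/
noncomputable def bEx (x : ℝ) (n : ℕ) : ℤ := ⌊1 / (exm^[n] x) + 1⌋

/-- `qstar x (n+1) = q*_n`, with `q*_{-1} = 0`, `q*_0 = 1` and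
`q*_n = b_n·q*_{n−1} − q*_{n−2}`. -/
noncomputable def qstar (x : ℝ) : ℕ → ℤ
  | 0 => 0
  | 1 => 1
  | n + 2 => bEx x n * qstar x (n + 1) - qstar x n

/-- `x` is a Brjuno number if `∑_{n≥0} log(q_{n+1})/q_n < ∞` for the regular
continued fraction of `x − ⌊x⌋`. -/
def IsBrjuno (x : ℝ) : Prop :=
  Summable fun n : ℕ =>
    Real.log (qcf (Int.fract x) (n + 2) : ℝ) / (qcf (Int.fract x) (n + 1) : ℝ)

/-- `x` is a semi-Brjuno number if `∑_{n≥0} log(b_{n+1} − 1)/q*_n < ∞` for the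
by-excess continued fraction of `x − ⌊x⌋`. -/
def IsSemiBrjuno (x : ℝ) : Prop :=
  Summable fun n : ℕ =>
    Real.log ((bEx (Int.fract x) n : ℝ) - 1) / (qstar (Int.fract x) (n + 1) : ℝ)

/-! The by-excess map is `A₀ = 1 - G`. Started at `1 - w` with `a = ⌊1/w⌋`, it produces the
digit `2` (which contributes `log 1 = 0`) `a - 1` times, then the digit `⌊1/Gw⌋ + 2`, and lands
at `1 - G²w`. Inside such a block `q*` grows arithmetically, and at the block boundaries it runs
through the regular denominators. So the semi-Brjuno series of `-x`, i.e. of `1 - {x}`, is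
`∑ log (a_{2k+2} + 1) / q_{2k+1}`, and that of `x`, whose first step lands at `1 - G{x}`, is up
to its first term `∑ log (a_{2k+1} + 1) / q_{2k}`. As `q_n` grows exponentially, the Brjuno
series is comparable to `∑ log (a_{n+1} + 1) / q_n`, the sum of these two. -/

lemma summable_iff_even_and_odd {α : Type*} [AddCommGroup α] [UniformSpace α]
    [IsUniformAddGroup α] [CompleteSpace α] {f : ℕ → α} :
    Summable f ↔ (Summable fun k => f (2 * k)) ∧ Summable fun k => f (2 * k + 1) :=
  ⟨fun h => ⟨h.comp_injective (mul_right_injective₀ two_ne_zero),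
    h.comp_injective ((add_left_injective 1).comp (mul_right_injective₀ two_ne_zero))⟩,
    fun h => h.1.even_add_odd h.2⟩

lemma log_div_le_two_div_sqrt {Q : ℝ} (hQ : 0 < Q) : Real.log Q / Q ≤ 2 / √Q := by
  have hs : 0 < √Q := Real.sqrt_pos.2 hQ
  have hlog : Real.log Q ≤ 2 * √Q := by
    linarith [Real.log_sqrt hQ.le, Real.log_le_sub_one_of_pos hs]
  calc Real.log Q / Q ≤ 2 * √Q / Q := div_le_div_of_nonneg_right hlog hQ.le
    _ = 2 / √Q := by
      rw [div_eq_div_iff hQ.ne' hs.ne', mul_assoc, Real.mul_self_sqrt hQ.le]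

lemma one_div_le_one_div_sqrt {Q : ℝ} (hQ : 1 ≤ Q) : 1 / Q ≤ 1 / √Q :=
  one_div_le_one_div_of_le (Real.sqrt_pos.2 (by linarith)) (Real.sqrt_le_self_iff.2 (Or.inr hQ))

section Blocks

variable {A : ℕ → ℕ}

lemma exists_eq_sum_range_add (hA : ∀ k, 1 ≤ A k) :
    ∀ n, ∃ k m, m < A k ∧ n = ∑ j ∈ Finset.range k, A j + m
  | 0 => ⟨0, 0, hA 0, by simp⟩
  | n + 1 => by
    obtain ⟨k, m, hm, rfl⟩ := exists_eq_sum_range_add hA n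
    rcases lt_or_eq_of_le (Nat.succ_le_of_lt hm) with hlt | heq
    · exact ⟨k, m + 1, hlt, by ring⟩
    · exact ⟨k + 1, 0, hA (k + 1), by rw [Finset.sum_range_succ]; omega⟩

lemma summable_iff_summable_blockEnd {α : Type*} [AddCommMonoid α] [TopologicalSpace α]
    {f : ℕ → α} (hA : ∀ k, 1 ≤ A k)
    (hf : ∀ k m, m + 1 < A k → f (∑ j ∈ Finset.range k, A j + m) = 0) :
    Summable f ↔ Summable fun k => f (∑ j ∈ Finset.range k, A j + (A k - 1)) := by
  have hmono : StrictMono fun k => ∑ j ∈ Finset.range k, A j + (A k - 1) := by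
    refine strictMono_nat_of_lt_succ fun k => ?_
    simp only [Finset.sum_range_succ]
    have := hA k
    omega
  refine (hmono.injective.summable_iff fun n hn => ?_).symm
  obtain ⟨k, m, hm, rfl⟩ := exists_eq_sum_range_add hA n
  refine hf k m (lt_of_le_of_ne hm fun hend => hn ⟨k, ?_⟩)
  show ∑ j ∈ Finset.range k, A j + (A k - 1) = ∑ j ∈ Finset.range k, A j + m
  omega

lemma eq_add_mul_of_recurrence_two {Q : ℕ → ℤ} {s L : ℕ} {X Y : ℤ} (h0 : Q s = X)
    (h1 : Q (s + 1) = X + Y)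
    (hQ : ∀ m, m + 2 ≤ L → Q (s + m + 2) = 2 * Q (s + m + 1) - Q (s + m)) :
    ∀ m, m + 1 ≤ L → Q (s + m) = X + m * Y ∧ Q (s + m + 1) = X + (m + 1) * Y
  | 0, _ => by simpa using ⟨h0, h1⟩
  | m + 1, hm => by
    obtain ⟨ih0, ih1⟩ := eq_add_mul_of_recurrence_two h0 h1 hQ m (by omega)
    refine ⟨by rw [← add_assoc, ih1]; push_cast; ring, ?_⟩
    rw [show s + (m + 1) + 1 = s + m + 2 by ring, hQ m hm, ih0, ih1]
    push_cast
    ring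

lemma eq_at_blockStart_of_recurrence {Q b c X Y : ℕ → ℤ} (hA : ∀ k, 1 ≤ A k)
    (hQ : ∀ n, Q (n + 2) = b n * Q (n + 1) - Q n)
    (hb : ∀ k m, m + 1 < A k → b (∑ j ∈ Finset.range k, A j + m) = 2)
    (hb' : ∀ k, b (∑ j ∈ Finset.range k, A j + (A k - 1)) = c k + 2)
    (hX : ∀ k, X (k + 1) = X k + A k * Y k) (hY : ∀ k, Y (k + 1) = c k * X (k + 1) + Y k)
    (h0 : Q 0 = X 0) (h1 : Q 1 = X 0 + Y 0) :
    ∀ k, Q (∑ j ∈ Finset.range k, A j) = X k ∧ Q (∑ j ∈ Finset.range k, A j + 1) = X k + Y k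
  | 0 => by simpa using ⟨h0, h1⟩
  | k + 1 => by
    obtain ⟨ih0, ih1⟩ := eq_at_blockStart_of_recurrence hA hQ hb hb' hX hY h0 h1 k
    set s := ∑ j ∈ Finset.range k, A j
    obtain ⟨hlast, hend⟩ := eq_add_mul_of_recurrence_two (L := A k) ih0 ih1
      (fun m (hm : m + 2 ≤ A k) => by rw [hQ, hb k m (by omega : m + 1 < A k)])
      (A k - 1) (by have := hA k; omega)
    have hs : ∑ j ∈ Finset.range (k + 1), A j = s + (A k - 1) + 1 := by
      rw [Finset.sum_range_succ]
      have := hA k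
      omega
    have hXk : X (k + 1) = X k + ((A k - 1 : ℕ) + 1) * Y k := by
      rw [hX, Nat.cast_sub (hA k)]
      ring
    rw [hs, hQ, hb' k, hend, hlast, hY, hXk]
    constructor <;> ring

end Blocks

lemma irrational_gmap {t : ℝ} (ht : Irrational t) : Irrational (gmap t) := by
  simpa [gmap, one_div] using ht.inv.sub_intCast ⌊t⁻¹⌋

lemma gmap_pos {t : ℝ} (ht : Irrational t) : 0 < gmap t :=
  (Int.fract_nonneg _).lt_of_ne' (irrational_gmap ht).ne_zero

lemma gmap_lt_one (t : ℝ) : gmap t < 1 := Int.fract_lt_one _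

lemma iterate_gmap_mem_Ioo {z : ℝ} (hz : Irrational z) (hz0 : 0 < z) (hz1 : z < 1) :
    ∀ n, Irrational (gmap^[n] z) ∧ gmap^[n] z ∈ Ioo 0 1
  | 0 => ⟨hz, hz0, hz1⟩
  | n + 1 => by
    rw [Function.iterate_succ_apply']
    have hn := (iterate_gmap_mem_Ioo hz hz0 hz1 n).1
    exact ⟨irrational_gmap hn, gmap_pos hn, gmap_lt_one _⟩

lemma ra_succ (z : ℝ) (n : ℕ) : ra z (n + 1) = ra (gmap z) n := by
  rw [ra, ra, Function.iterate_succ_apply]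

lemma one_le_ra {z : ℝ} (hz : Irrational z) (hz0 : 0 < z) (hz1 : z < 1) (n : ℕ) :
    1 ≤ ra z n := by
  obtain ⟨-, h0, h1⟩ := iterate_gmap_mem_Ioo hz hz0 hz1 n
  exact Int.le_floor.2 (by exact_mod_cast (one_lt_one_div h0 h1).le)

lemma qcf_succ_succ (z : ℝ) (n : ℕ) : qcf z (n + 2) = ra z n * qcf z (n + 1) + qcf z n := rfl

section Denominators

variable {z : ℝ}

lemma qcf_nonneg_and_le_and_one_le (hra : ∀ n, 1 ≤ ra z n) :
    ∀ n, 0 ≤ qcf z n ∧ qcf z n ≤ qcf z (n + 1) ∧ 1 ≤ qcf z (n + 1)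
  | 0 => by simp [qcf]
  | n + 1 => by
    obtain ⟨h0, h1, h2⟩ := qcf_nonneg_and_le_and_one_le hra n
    rw [qcf_succ_succ]
    refine ⟨by omega, ?_, ?_⟩ <;> nlinarith [hra n]

lemma qcf_nonneg (hra : ∀ n, 1 ≤ ra z n) (n : ℕ) : 0 ≤ qcf z n :=
  (qcf_nonneg_and_le_and_one_le hra n).1

lemma qcf_le_qcf_succ (hra : ∀ n, 1 ≤ ra z n) (n : ℕ) : qcf z n ≤ qcf z (n + 1) :=
  (qcf_nonneg_and_le_and_one_le hra n).2.1

lemma one_le_qcf (hra : ∀ n, 1 ≤ ra z n) (n : ℕ) : 1 ≤ qcf z (n + 1) :=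
  (qcf_nonneg_and_le_and_one_le hra n).2.2

lemma ra_add_one_le_two_mul_qcf (hra : ∀ n, 1 ≤ ra z n) (n : ℕ) :
    ra z n + 1 ≤ 2 * qcf z (n + 2) := by
  rw [qcf_succ_succ]
  nlinarith [hra n, one_le_qcf hra n, qcf_nonneg hra n]

lemma qcf_le_ra_add_one_mul (hra : ∀ n, 1 ≤ ra z n) (n : ℕ) :
    qcf z (n + 2) ≤ (ra z n + 1) * qcf z (n + 1) := by
  rw [qcf_succ_succ]
  linarith [qcf_le_qcf_succ hra n]

lemma two_pow_le_qcf (hra : ∀ n, 1 ≤ ra z n) (n : ℕ) : ∀ k, 2 ^ k ≤ qcf z (2 * k + n + 1)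
  | 0 => by simpa using one_le_qcf hra n
  | k + 1 => by
    have ih := two_pow_le_qcf hra n k
    rw [show 2 * (k + 1) + n + 1 = (2 * k + n + 1) + 2 by ring, qcf_succ_succ, pow_succ]
    have h := le_mul_of_one_le_left (qcf_nonneg hra (2 * k + n + 1 + 1)) (hra (2 * k + n + 1))
    linarith [qcf_le_qcf_succ hra (2 * k + n + 1)]

lemma summable_one_div_sqrt_qcf (hra : ∀ n, 1 ≤ ra z n) :
    Summable fun n : ℕ => 1 / √(qcf z (n + 1) : ℝ) := by
  have hgeom : Summable fun k : ℕ => (√2)⁻¹ ^ k :=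
    summable_geometric_of_lt_one (by positivity) (inv_lt_one_of_one_lt₀ (by
      rw [Real.lt_sqrt zero_le_one]; norm_num))
  have hbound (n k : ℕ) : 1 / √(qcf z (2 * k + n + 1) : ℝ) ≤ (√2)⁻¹ ^ k := by
    have h : (2 : ℝ) ^ k ≤ qcf z (2 * k + n + 1) := by exact_mod_cast two_pow_le_qcf hra n k
    rw [inv_pow, one_div]
    refine inv_anti₀ (by positivity) ((Real.le_sqrt' (by positivity)).2 ?_)
    rwa [← pow_mul, mul_comm, pow_mul, Real.sq_sqrt zero_le_two]
  refine Summable.even_add_odd ?_ ?_ <;>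
    refine Summable.of_nonneg_of_le (fun k => by positivity) (fun k => ?_) hgeom
  · simpa using hbound 0 k
  · simpa [add_assoc] using hbound 1 k

lemma summable_log_qcf_div_iff (hra : ∀ n, 1 ≤ ra z n) :
    (Summable fun n : ℕ => Real.log (qcf z (n + 2) : ℝ) / (qcf z (n + 1) : ℝ)) ↔
      Summable fun n : ℕ => Real.log ((ra z n : ℝ) + 1) / (qcf z (n + 1) : ℝ) := by
  have hsqrt := summable_one_div_sqrt_qcf hra
  have hq (n : ℕ) : (1 : ℝ) ≤ qcf z (n + 1) := by exact_mod_cast one_le_qcf hra n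
  have ha (n : ℕ) : (1 : ℝ) ≤ ra z n := by exact_mod_cast hra n
  constructor
  · intro h
    refine Summable.of_nonneg_of_le (fun n => div_nonneg (Real.log_nonneg (by linarith [ha n]))
      (by linarith [hq n])) (fun n => ?_) (h.add (hsqrt.mul_left (Real.log 2)))
    have hle : (ra z n : ℝ) + 1 ≤ 2 * qcf z (n + 2) := by
      exact_mod_cast ra_add_one_le_two_mul_qcf hra n
    have hlog : Real.log ((ra z n : ℝ) + 1) ≤ Real.log 2 + Real.log (qcf z (n + 2) : ℝ) := by
      rw [← Real.log_mul two_ne_zero (by linarith [hq (n + 1)])]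
      exact Real.log_le_log (by linarith [ha n]) hle
    calc Real.log ((ra z n : ℝ) + 1) / qcf z (n + 1)
        ≤ Real.log (qcf z (n + 2) : ℝ) / qcf z (n + 1) + Real.log 2 * (1 / qcf z (n + 1)) := by
          rw [mul_one_div, ← add_div]
          exact div_le_div_of_nonneg_right (by linarith) (by linarith [hq n])
      _ ≤ _ := add_le_add_right (mul_le_mul_of_nonneg_left
          (one_div_le_one_div_sqrt (hq n)) (Real.log_nonneg one_le_two)) _
  · intro h
    refine Summable.of_nonneg_of_le (fun n => div_nonneg (Real.log_nonneg (hq (n + 1)))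
      (by linarith [hq n])) (fun n => ?_) (h.add (hsqrt.mul_left 2))
    have hle : (qcf z (n + 2) : ℝ) ≤ ((ra z n : ℝ) + 1) * qcf z (n + 1) := by
      exact_mod_cast qcf_le_ra_add_one_mul hra n
    have hlog : Real.log (qcf z (n + 2) : ℝ) ≤
        Real.log ((ra z n : ℝ) + 1) + Real.log (qcf z (n + 1) : ℝ) := by
      rw [← Real.log_mul (by linarith [ha n]) (by linarith [hq n])]
      exact Real.log_le_log (by linarith [hq (n + 1)]) hle
    calc Real.log (qcf z (n + 2) : ℝ) / qcf z (n + 1)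
        ≤ Real.log ((ra z n : ℝ) + 1) / qcf z (n + 1) +
            Real.log (qcf z (n + 1) : ℝ) / qcf z (n + 1) := by
          rw [← add_div]
          exact div_le_div_of_nonneg_right hlog (by linarith [hq n])
      _ ≤ _ := by
          rw [mul_one_div]
          exact add_le_add_right (log_div_le_two_div_sqrt (by linarith [hq n])) _

end Denominators

lemma exm_eq_one_sub_gmap (t : ℝ) : exm t = 1 - gmap t := by
  rw [exm, gmap, Int.floor_add_one]
  push_cast
  ring

lemma bEx_eq_floor_add_one (x : ℝ) (n : ℕ) : bEx x n = ⌊1 / exm^[n] x⌋ + 1 :=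
  Int.floor_add_one _

lemma bEx_add (x : ℝ) (n m : ℕ) : bEx x (n + m) = bEx (exm^[n] x) m := by
  rw [bEx, bEx, Nat.add_comm n m, Function.iterate_add_apply]

lemma bEx_zero (z : ℝ) : bEx z 0 = ra z 0 + 1 := bEx_eq_floor_add_one z 0

lemma qstar_succ_succ (x : ℝ) (n : ℕ) :
    qstar x (n + 2) = bEx x n * qstar x (n + 1) - qstar x n := rfl

lemma floor_one_div_of_one_lt {v : ℝ} (hv : 1 < v) : ⌊1 / v⌋ = 0 :=
  Int.floor_eq_zero_iff.2 ⟨by positivity, (div_lt_one (by linarith)).2 hv⟩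

lemma gmap_of_one_lt {v : ℝ} (hv : 1 < v) : gmap v = 1 / v := by
  rw [gmap, floor_one_div_of_one_lt hv, Int.cast_zero, sub_zero]

lemma one_div_one_sub_one_div {u : ℝ} (hu : 1 < u) : 1 / (1 - 1 / u) = 1 / (u - 1) + 1 := by
  have h1 : u - 1 ≠ 0 := by linarith
  field_simp
  ring

lemma exm_one_sub_one_div {u : ℝ} (hu : 1 < u) : exm (1 - 1 / u) = 1 - gmap (u - 1) := by
  rw [exm_eq_one_sub_gmap]
  show 1 - Int.fract (1 / (1 - 1 / u)) = 1 - Int.fract (1 / (u - 1))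
  rw [one_div_one_sub_one_div hu, Int.fract_add_one]

lemma floor_one_div_one_sub_one_div {u : ℝ} (hu : 1 < u) :
    ⌊1 / (1 - 1 / u)⌋ = ⌊1 / (u - 1)⌋ + 1 := by
  rw [one_div_one_sub_one_div hu, Int.floor_add_one]

section OneSub

variable {w : ℝ}

lemma one_lt_one_div_sub {m : ℕ} (hw : Irrational w) (hm : m < ⌊1 / w⌋₊) : 1 < 1 / w - m := by
  have hle : ((m + 1 : ℕ) : ℝ) ≤ 1 / w := (Nat.le_floor_iff' (Nat.succ_ne_zero m)).1 hm
  have hne : ((m + 1 : ℕ) : ℝ) ≠ 1 / w := ((one_div w ▸ hw.inv).ne_nat (m + 1)).symm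
  push_cast at hle hne
  linarith [lt_of_le_of_ne hle hne]

lemma one_lt_one_div_sub_sub_one {m : ℕ} (hw : Irrational w) (hm : m + 1 < ⌊1 / w⌋₊) :
    1 < 1 / w - m - 1 := by
  have h := one_lt_one_div_sub hw hm
  push_cast at h
  linarith

lemma iterate_exm_one_sub (hw : Irrational w) :
    ∀ m : ℕ, m < ⌊1 / w⌋₊ → exm^[m] (1 - w) = 1 - 1 / (1 / w - m)
  | 0, _ => by simp
  | m + 1, hm => by
    rw [Function.iterate_succ_apply', iterate_exm_one_sub hw m (by omega),
      exm_one_sub_one_div (one_lt_one_div_sub hw (by omega)),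
      gmap_of_one_lt (one_lt_one_div_sub_sub_one hw hm)]
    push_cast
    ring

lemma iterate_exm_succ_one_sub {m : ℕ} (hw : Irrational w) (hm : m < ⌊1 / w⌋₊) :
    exm^[m + 1] (1 - w) = 1 - gmap (1 / w - m - 1) := by
  rw [Function.iterate_succ_apply', iterate_exm_one_sub hw m hm,
    exm_one_sub_one_div (one_lt_one_div_sub hw hm), sub_sub]

lemma bEx_one_sub {m : ℕ} (hw : Irrational w) (hm : m < ⌊1 / w⌋₊) :
    bEx (1 - w) m = ⌊1 / (1 / w - m - 1)⌋ + 2 := by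
  rw [bEx_eq_floor_add_one, iterate_exm_one_sub hw m hm,
    floor_one_div_one_sub_one_div (one_lt_one_div_sub hw hm), add_assoc]
  rfl

lemma bEx_one_sub_of_succ_lt {m : ℕ} (hw : Irrational w) (hm : m + 1 < ⌊1 / w⌋₊) :
    bEx (1 - w) m = 2 := by
  rw [bEx_one_sub hw (by omega), floor_one_div_of_one_lt (one_lt_one_div_sub_sub_one hw hm),
    zero_add]

lemma one_le_floor_one_div (hw0 : 0 < w) (hw1 : w < 1) : 1 ≤ ⌊1 / w⌋₊ :=
  Nat.le_floor (by rw [Nat.cast_one]; exact (one_lt_one_div hw0 hw1).le)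

lemma one_div_sub_floor_pred (hw0 : 0 < w) (hw1 : w < 1) :
    1 / w - ((⌊1 / w⌋₊ - 1 : ℕ) : ℝ) - 1 = gmap w := by
  rw [Nat.cast_sub (one_le_floor_one_div hw0 hw1), natCast_floor_eq_intCast_floor (by positivity),
    gmap]
  push_cast
  ring

lemma bEx_one_sub_floor_pred (hw : Irrational w) (hw0 : 0 < w) (hw1 : w < 1) :
    bEx (1 - w) (⌊1 / w⌋₊ - 1) = ra w 1 + 2 := by
  rw [bEx_one_sub hw (by have := one_le_floor_one_div hw0 hw1; omega),
    one_div_sub_floor_pred hw0 hw1]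
  rfl

lemma iterate_exm_one_sub_floor (hw : Irrational w) (hw0 : 0 < w) (hw1 : w < 1) :
    exm^[⌊1 / w⌋₊] (1 - w) = 1 - gmap^[2] w := by
  have h := one_le_floor_one_div hw0 hw1
  rw [← Nat.sub_add_cancel h, iterate_exm_succ_one_sub hw (by omega),
    one_div_sub_floor_pred hw0 hw1]
  rfl

end OneSub

lemma ra_iterate_gmap (z : ℝ) (n m : ℕ) : ra (gmap^[n] z) m = ra z (m + n) := by
  rw [ra, ra, Function.iterate_add_apply]

section OneSubOrbit

variable {z : ℝ}

lemma iterate_exm_one_sub_sum (hz : Irrational z) (hz0 : 0 < z) (hz1 : z < 1) :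
    ∀ k, exm^[∑ j ∈ Finset.range k, ⌊1 / gmap^[2 * j] z⌋₊] (1 - z) = 1 - gmap^[2 * k] z
  | 0 => rfl
  | k + 1 => by
    obtain ⟨hw, hw0, hw1⟩ := iterate_gmap_mem_Ioo hz hz0 hz1 (2 * k)
    rw [Finset.sum_range_succ, add_comm, Function.iterate_add_apply,
      iterate_exm_one_sub_sum hz hz0 hz1 k, iterate_exm_one_sub_floor hw hw0 hw1,
      ← Function.iterate_add_apply, show 2 + 2 * k = 2 * (k + 1) by ring]

lemma summable_log_bEx_one_sub_div_iff (hz : Irrational z) (hz0 : 0 < z) (hz1 : z < 1)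
    {Q X Y : ℕ → ℤ} (hQ : ∀ n, Q (n + 2) = bEx (1 - z) n * Q (n + 1) - Q n)
    (h0 : Q 0 = X 0) (h1 : Q 1 = X 0 + Y 0)
    (hX : ∀ k, X (k + 1) = X k + ra z (2 * k) * Y k)
    (hY : ∀ k, Y (k + 1) = ra z (2 * k + 1) * X (k + 1) + Y k) :
    (Summable fun n : ℕ => Real.log ((bEx (1 - z) n : ℝ) - 1) / (Q (n + 1) : ℝ)) ↔
      Summable fun k : ℕ => Real.log ((ra z (2 * k + 1) : ℝ) + 1) / (X (k + 1) : ℝ) := by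
  set A : ℕ → ℕ := fun k => ⌊1 / gmap^[2 * k] z⌋₊
  have hw (k : ℕ) := iterate_gmap_mem_Ioo hz hz0 hz1 (2 * k)
  have hA (k : ℕ) : 1 ≤ A k := one_le_floor_one_div (hw k).2.1 (hw k).2.2
  have hA_eq (k : ℕ) : (A k : ℤ) = ra z (2 * k) :=
    Int.natCast_floor_eq_floor (one_div_nonneg.2 (hw k).2.1.le)
  have hbEx (k m : ℕ) :
      bEx (1 - z) (∑ j ∈ Finset.range k, A j + m) = bEx (1 - gmap^[2 * k] z) m := by
    rw [bEx_add, iterate_exm_one_sub_sum hz hz0 hz1]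
  have hb (k m : ℕ) (hm : m + 1 < A k) : bEx (1 - z) (∑ j ∈ Finset.range k, A j + m) = 2 := by
    rw [hbEx]
    exact bEx_one_sub_of_succ_lt (hw k).1 hm
  have hb' (k : ℕ) :
      bEx (1 - z) (∑ j ∈ Finset.range k, A j + (A k - 1)) = ra z (2 * k + 1) + 2 := by
    rw [hbEx, bEx_one_sub_floor_pred (hw k).1 (hw k).2.1 (hw k).2.2, ra_iterate_gmap, add_comm 1]
  have hQX (k : ℕ) : Q (∑ j ∈ Finset.range k, A j + (A k - 1) + 1) = X (k + 1) := by
    have h := (eq_at_blockStart_of_recurrence hA hQ hb hb' (fun k => by rw [hA_eq]; exact hX k)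
      hY h0 h1 (k + 1)).1
    rwa [Finset.sum_range_succ, ← Nat.sub_add_cancel (hA k), ← add_assoc] at h
  rw [summable_iff_summable_blockEnd hA fun k m hm => by rw [hb k m hm]; norm_num]
  refine Iff.of_eq (congrArg Summable (funext fun k => ?_))
  rw [hb' k, hQX k]
  congr 2
  push_cast
  ring

lemma summable_log_bEx_one_sub_iff_odd (hz : Irrational z) (hz0 : 0 < z) (hz1 : z < 1) :
    (Summable fun n : ℕ => Real.log ((bEx (1 - z) n : ℝ) - 1) / (qstar (1 - z) (n + 1) : ℝ)) ↔
      Summable fun k : ℕ => Real.log ((ra z (2 * k + 1) : ℝ) + 1) / (qcf z (2 * k + 2) : ℝ) :=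
  summable_log_bEx_one_sub_div_iff hz hz0 hz1 (X := fun k => qcf z (2 * k))
    (Y := fun k => qcf z (2 * k + 1)) (qstar_succ_succ _) rfl rfl
    (fun k => by
      show qcf z (2 * k + 2) = _
      rw [qcf_succ_succ]
      ring)
    (fun k => by
      show qcf z (2 * k + 1 + 2) = ra z (2 * k + 1) * qcf z (2 * k + 2) + _
      rw [qcf_succ_succ])

lemma summable_log_bEx_iff_even (hz : Irrational z) (hz0 : 0 < z) (hz1 : z < 1) :
    (Summable fun n : ℕ => Real.log ((bEx z n : ℝ) - 1) / (qstar z (n + 1) : ℝ)) ↔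
      Summable fun k : ℕ => Real.log ((ra z (2 * k) : ℝ) + 1) / (qcf z (2 * k + 1) : ℝ) := by
  obtain ⟨hg, hg0, hg1⟩ : Irrational (gmap z) ∧ gmap z ∈ Ioo 0 1 :=
    iterate_gmap_mem_Ioo hz hz0 hz1 1
  have hb (n : ℕ) : bEx z (n + 1) = bEx (1 - gmap z) n := by
    rw [add_comm, bEx_add, Function.iterate_one, exm_eq_one_sub_gmap]
  have h := summable_log_bEx_one_sub_div_iff hg hg0 hg1 (Q := fun n => qstar z (n + 1))
    (X := fun k => qcf z (2 * k + 1)) (Y := fun k => qcf z (2 * k + 2))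
    (fun n => by simp only [qstar_succ_succ, hb]) (by rfl)
    (by simp [bEx_zero, qstar, qcf, add_comm])
    (fun k => by
      show qcf z (2 * k + 1 + 2) = _ + ra (gmap z) (2 * k) * _
      rw [qcf_succ_succ, ← ra_succ]
      ring)
    (fun k => by
      show qcf z (2 * k + 2 + 2) = ra (gmap z) (2 * k + 1) * qcf z (2 * k + 3) + _
      rw [qcf_succ_succ, ← ra_succ])
  rw [← summable_nat_add_iff 1, ← summable_nat_add_iff 1 (f := fun k : ℕ =>
    Real.log ((ra z (2 * k) : ℝ) + 1) / (qcf z (2 * k + 1) : ℝ))]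
  simp only [hb, ← ra_succ] at h ⊢
  exact h

end OneSubOrbit

theorem isBrjuno_iff_isSemiBrjuno_and_neg (x : ℝ) (hirr : Irrational x) :
    IsBrjuno x ↔ IsSemiBrjuno x ∧ IsSemiBrjuno (-x) := by
  have hz : Irrational (Int.fract x) := hirr.sub_intCast ⌊x⌋
  have hz0 : 0 < Int.fract x := (Int.fract_nonneg x).lt_of_ne' hz.ne_zero
  have hz1 : Int.fract x < 1 := Int.fract_lt_one x
  rw [IsBrjuno, IsSemiBrjuno, IsSemiBrjuno, Int.fract_neg hz.ne_zero,
    summable_log_qcf_div_iff (one_le_ra hz hz0 hz1), summable_iff_even_and_odd,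
    summable_log_bEx_iff_even hz hz0 hz1, summable_log_bEx_one_sub_iff_odd hz hz0 hz1]
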